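/- arXiv:2306.14247 — 3 statements merged into one kernel-verified Lean document; each statement's English description precedes it below -/
import Mathlib

section
/- If (p*, π*) is a package-linear Walrasian equilibrium and π' is any efficient allocation, then (p*, π') is also a package-linear Walrasian equilibrium. -/
open Finset

/-- A package multiset `k : Finset N → ℕ` is feasible w.r.t. supply `Ω` if for
every variety `j`, the total number of units of `j` used does not exceed `Ω j`. -/
def Feasible {N : Type*} [Fintype N] [DecidableEq N] (Ω : N → ℕ)
    (k : Finset N → ℕ) : Prop :=
  ∀ j : N, (∑ S : Finset N, if j ∈ S then k S else 0) ≤ Ω j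

/-- Package-linear price of a package multiset. -/
def price {N : Type*} [Fintype N] [DecidableEq N] (p : Finset N → ℝ)
    (k : Finset N → ℕ) : ℝ :=
  ∑ S : Finset N, (k S : ℝ) * p S

/-- The total package multiset sold under allocation `π`. -/
def totalAlloc {N : Type*} {L : ℕ} (π : Fin L → Finset N → ℕ) :
    Finset N → ℕ :=
  fun S => ∑ l : Fin L, π l S

/-- An allocation: a tuple of package multisets whose sum is feasible. -/
def IsAllocation {N : Type*} [Fintype N] [DecidableEq N] (Ω : N → ℕ) {L : ℕ}
    (π : Fin L → Finset N → ℕ) : Prop :=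
  Feasible Ω (totalAlloc π)

/-- Efficiency of an allocation. -/
def Efficient {N : Type*} [Fintype N] [DecidableEq N] (Ω : N → ℕ) {L : ℕ}
    (V : Fin L → (Finset N → ℕ) → ℤ) (C : (Finset N → ℕ) → ℤ)
    (π : Fin L → Finset N → ℕ) : Prop :=
  IsAllocation Ω π ∧
    ∀ π' : Fin L → Finset N → ℕ, IsAllocation Ω π' →
      (∑ l : Fin L, V l (π l)) - C (totalAlloc π) ≥
        (∑ l : Fin L, V l (π' l)) - C (totalAlloc π')

/-- Package-linear Walrasian equilibrium. -/
def WalrasianEquilibrium {N : Type*} [Fintype N] [DecidableEq N] (Ω : N → ℕ)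
    {L : ℕ} (V : Fin L → (Finset N → ℕ) → ℤ) (C : (Finset N → ℕ) → ℤ)
    (p : Finset N → ℝ) (π : Fin L → Finset N → ℕ) : Prop :=
  IsAllocation Ω π ∧
    (∀ l : Fin L, ∀ k : Finset N → ℕ, Feasible Ω k →
      (V l (π l) : ℝ) - price p (π l) ≥ (V l k : ℝ) - price p k) ∧
    (∀ k : Finset N → ℕ, Feasible Ω k →
      price p (totalAlloc π) - (C (totalAlloc π) : ℝ) ≥
        price p k - (C k : ℝ))


lemma price_total {N : Type*} [Fintype N] [DecidableEq N] (p : Finset N → ℝ) {L : ℕ}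
    (π : Fin L → Finset N → ℕ) :
    price p (totalAlloc π) = ∑ l : Fin L, price p (π l) := by
  simp only [price, totalAlloc]
  rw [Finset.sum_comm]
  refine Finset.sum_congr rfl fun S _ => ?_
  push_cast
  rw [Finset.sum_mul]

lemma feasible_component {N : Type*} [Fintype N] [DecidableEq N] {Ω : N → ℕ} {L : ℕ}
    {π : Fin L → Finset N → ℕ} (h : Feasible Ω (totalAlloc π)) (l : Fin L) :
    Feasible Ω (π l) := by
  intro j
  refine le_trans ?_ (h j)
  refine Finset.sum_le_sum fun S _ => ?_
  simp only [totalAlloc]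
  split
  · exact Finset.single_le_sum (f := fun l' => π l' S) (fun _ _ => Nat.zero_le _)
      (Finset.mem_univ l)
  · exact le_refl _

/-- If `(p*, π*)` is a package-linear Walrasian equilibrium and
`π'` is any efficient allocation, then `(p*, π')` is also a package-linear
Walrasian equilibrium. -/
theorem walrasian_equilibrium_of_efficient
    {N : Type*} [Fintype N] [DecidableEq N] (Ω : N → ℕ) {L : ℕ}
    (V : Fin L → (Finset N → ℕ) → ℤ) (C : (Finset N → ℕ) → ℤ)
    (hV0 : ∀ l : Fin L, V l (fun _ => 0) = 0)
    (pstar : Finset N → ℝ) (hp0 : pstar ∅ = 0)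
    (πstar π' : Fin L → Finset N → ℕ)
    (heq : WalrasianEquilibrium Ω V C pstar πstar)
    (heff : Efficient Ω V C π') :
    WalrasianEquilibrium Ω V C pstar π' := by
  obtain ⟨hallocstar, hbuy, hsell⟩ := heq
  obtain ⟨halloc', heffineq⟩ := heff
  have hfeas' : ∀ l, Feasible Ω (π' l) := fun l => feasible_component halloc' l
  have hA : ∀ l : Fin L, (0:ℝ) ≤ ((V l (πstar l) : ℝ) - price pstar (πstar l)) -
      ((V l (π' l) : ℝ) - price pstar (π' l)) := fun l => by
    linarith [hbuy l (π' l) (hfeas' l)]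
  have hS : (0:ℝ) ≤ (price pstar (totalAlloc πstar) - (C (totalAlloc πstar) : ℝ)) -
      (price pstar (totalAlloc π') - (C (totalAlloc π') : ℝ)) := by
    linarith [hsell (totalAlloc π') halloc']
  have hsoc := heffineq πstar hallocstar
  have hsocR : ((∑ l : Fin L, (V l (πstar l) : ℝ)) - (C (totalAlloc πstar) : ℝ)) -
      ((∑ l : Fin L, (V l (π' l) : ℝ)) - (C (totalAlloc π') : ℝ)) ≤ 0 := by
    have hsocR' : (((∑ l : Fin L, V l (π' l)) - C (totalAlloc π') : ℤ) : ℝ) ≥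
        (((∑ l : Fin L, V l (πstar l)) - C (totalAlloc πstar) : ℤ) : ℝ) := by
      exact_mod_cast hsoc
    push_cast at hsocR'
    linarith
  have key : (∑ l : Fin L, (((V l (πstar l) : ℝ) - price pstar (πstar l)) -
        ((V l (π' l) : ℝ) - price pstar (π' l))))
      + ((price pstar (totalAlloc πstar) - (C (totalAlloc πstar) : ℝ)) -
        (price pstar (totalAlloc π') - (C (totalAlloc π') : ℝ))) =
      ((∑ l : Fin L, (V l (πstar l) : ℝ)) - (C (totalAlloc πstar) : ℝ)) -
      ((∑ l : Fin L, (V l (π' l) : ℝ)) - (C (totalAlloc π') : ℝ)) := by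
    rw [price_total pstar πstar, price_total pstar π']
    rw [Finset.sum_sub_distrib, Finset.sum_sub_distrib, Finset.sum_sub_distrib]
    ring
  have hsumnn : (0:ℝ) ≤ ∑ l : Fin L, (((V l (πstar l) : ℝ) - price pstar (πstar l)) -
      ((V l (π' l) : ℝ) - price pstar (π' l))) :=
    Finset.sum_nonneg fun l _ => hA l
  have hsum0 : ∑ l : Fin L, (((V l (πstar l) : ℝ) - price pstar (πstar l)) -
      ((V l (π' l) : ℝ) - price pstar (π' l))) = 0 := by linarith
  have hS0 : (price pstar (totalAlloc πstar) - (C (totalAlloc πstar) : ℝ)) -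
      (price pstar (totalAlloc π') - (C (totalAlloc π') : ℝ)) = 0 := by linarith
  have heach : ∀ l : Fin L, (((V l (πstar l) : ℝ) - price pstar (πstar l)) -
      ((V l (π' l) : ℝ) - price pstar (π' l))) = 0 := by
    intro l
    have := (Finset.sum_eq_zero_iff_of_nonneg (fun l _ => hA l)).mp hsum0
    exact this l (Finset.mem_univ l)
  refine ⟨halloc', fun l k hk => ?_, fun k hk => ?_⟩
  · have := heach l
    linarith [hbuy l k hk]
  · linarith [hsell k hk]
end

section
/- If every buyer's value function is superadditive and the seller's marginal cost function is subadditive, then a package-linear Walrasian equilibrium exists: there exist a pricing function p : 2^N → ℝ with p(∅) = 0 and an assignment π of pairwise disjoint (possibly empty) subsets of N to the buyers such that (i) for each buyer l, v^l(π(l)) − p(π(l)) ≥ v^l(S) − p(S) for every S ⊆ N, and (ii) the collection of nonempty assigned packages maximizes Σ_{S ∈ 𝐤} (p(S) − c⁰(S)) over all collections 𝐤 of pairwise disjoint nonempty subsets of N. -/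
open Finset

/-- A valid partition (package multiset) of a one-unit-per-item market: a finite
collection of pairwise disjoint nonempty subsets of `N`. -/
def IsPartitionCollection {N : Type*} [Fintype N] [DecidableEq N]
    (K : Finset (Finset N)) : Prop :=
  (∀ S ∈ K, S ≠ ∅) ∧ (K : Set (Finset N)).PairwiseDisjoint id

/-- Iterated superadditivity: the sum of a superadditive function over a pairwise
disjoint finite family is at most its value on the union. -/
lemma sum_le_of_superadditive {N : Type*} [Fintype N] [DecidableEq N]
    (f : Finset N → ℤ) (hf0 : f ∅ = 0)
    (hf : ∀ S₁ S₂ : Finset N, Disjoint S₁ S₂ → f S₁ + f S₂ ≤ f (S₁ ∪ S₂)) :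
    ∀ K : Finset (Finset N), (K : Set (Finset N)).PairwiseDisjoint id →
      ∑ S ∈ K, f S ≤ f (K.sup id) := by
  intro K
  induction K using Finset.induction_on with
  | empty => intro _; simp [hf0]
  | @insert S K hS ih =>
    intro hK
    have hK' : (K : Set (Finset N)).PairwiseDisjoint id :=
      hK.subset (Finset.coe_subset.mpr (Finset.subset_insert S K))
    have hdisj : Disjoint S (K.sup id) := by
      rw [Finset.disjoint_sup_right]
      intro T hT
      exact hK (by simp) (by simp [hT]) (fun h => hS (h ▸ hT))
    calc ∑ T ∈ insert S K, f T = f S + ∑ T ∈ K, f T := Finset.sum_insert hS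
      _ ≤ f S + f (K.sup id) := by linarith [ih hK']
      _ ≤ f (S ∪ K.sup id) := hf _ _ hdisj
      _ = f ((insert S K).sup id) := by rw [Finset.sup_insert]; rfl

/-- If every buyer's value function is superadditive and the
seller's marginal cost function is subadditive, then a package-linear Walrasian
equilibrium exists. -/
theorem package_linear_walrasian_equilibrium_exists
    {N : Type*} [Fintype N] [DecidableEq N] {L : ℕ}
    (v : Fin L → Finset N → ℤ)
    (hv0 : ∀ l, v l ∅ = 0)
    (hvnonneg : ∀ l S, 0 ≤ v l S)
    (hvsuper : ∀ l, ∀ S₁ S₂ : Finset N, Disjoint S₁ S₂ →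
      v l S₁ + v l S₂ ≤ v l (S₁ ∪ S₂))
    (c : Finset N → ℤ)
    (hc0 : c ∅ = 0)
    (hcnonneg : ∀ S, 0 ≤ c S)
    (hcsub : ∀ S₁ S₂ : Finset N, Disjoint S₁ S₂ →
      c (S₁ ∪ S₂) ≤ c S₁ + c S₂) :
    ∃ (p : Finset N → ℝ) (π : Fin L → Finset N),
      p ∅ = 0 ∧
      (∀ l₁ l₂ : Fin L, l₁ ≠ l₂ → Disjoint (π l₁) (π l₂)) ∧
      (∀ l : Fin L, ∀ S : Finset N,
        (v l (π l) : ℝ) - p (π l) ≥ (v l S : ℝ) - p S) ∧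
      (∀ K : Finset (Finset N), IsPartitionCollection K →
        (∑ S ∈ (Finset.univ.image π).erase ∅, (p S - (c S : ℝ))) ≥
          ∑ S ∈ K, (p S - (c S : ℝ))) := by
  classical
  rcases Nat.eq_zero_or_pos L with hL | hL
  · -- no buyers: zero prices, empty assignment
    subst hL
    refine ⟨fun _ => 0, fun _ => ∅, rfl, ?_, ?_, ?_⟩
    · intro l₁; exact l₁.elim0
    · intro l; exact l.elim0
    · intro K _
      have h1 : ((Finset.univ : Finset (Fin 0)).image (fun _ => (∅ : Finset N))).erase ∅
          = ∅ := by
        simp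
      rw [h1]
      simp only [Finset.sum_empty]
      apply Finset.sum_nonpos
      intro S _
      simp only [zero_sub, neg_nonpos]
      exact_mod_cast hcnonneg S
  -- positive number of buyers
  haveI : Nonempty (Fin L) := ⟨⟨0, hL⟩⟩
  have hune : (Finset.univ : Finset (Fin L)).Nonempty := Finset.univ_nonempty
  -- the feasible assignments
  set D : (Fin L → Finset N) → Prop :=
    fun π => ∀ l₁ l₂ : Fin L, l₁ ≠ l₂ → Disjoint (π l₁) (π l₂) with hD
  set s : Finset (Fin L → Finset N) := Finset.univ.filter D with hs
  have hsne : s.Nonempty := by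
    refine ⟨fun _ => ∅, ?_⟩
    simp [hs, hD]
  -- welfare
  set H : (Fin L → Finset N) → ℤ :=
    fun π => ∑ l, (v l (π l) - c (π l)) with hH
  obtain ⟨π, hπs, hmax⟩ := s.exists_max_image H hsne
  have hπdisj : ∀ l₁ l₂ : Fin L, l₁ ≠ l₂ → Disjoint (π l₁) (π l₂) :=
    (Finset.mem_filter.mp hπs).2
  have hmax' : ∀ π' : Fin L → Finset N,
      (∀ l₁ l₂ : Fin L, l₁ ≠ l₂ → Disjoint (π' l₁) (π' l₂)) → H π' ≤ H π := by
    intro π' h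
    exact hmax π' (Finset.mem_filter.mpr ⟨Finset.mem_univ _, h⟩)
  -- prices
  set pZ : Finset N → ℤ := fun S => Finset.univ.sup' hune (fun l => v l S) with hpZ
  have hpZ_le : ∀ (l : Fin L) (S : Finset N), v l S ≤ pZ S := by
    intro l S
    show v l S ≤ Finset.univ.sup' hune (fun l => v l S)
    exact Finset.le_sup' (fun l => v l S) (Finset.mem_univ l)
  have hpZ0 : pZ ∅ = 0 := by
    refine le_antisymm ?_ ?_
    · show Finset.univ.sup' hune (fun l => v l ∅) ≤ 0
      exact Finset.sup'_le _ _ fun l _ => le_of_eq (hv0 l)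
    · rw [← hv0 (Classical.arbitrary (Fin L))]
      exact hpZ_le _ _
  -- the swap argument: each buyer values her own package at least as much as others
  have hargmax : ∀ l : Fin L, pZ (π l) = v l (π l) := by
    intro l
    have hub : ∀ l' : Fin L, v l' (π l) ≤ v l (π l) := by
      intro l'
      by_cases hll : l' = l
      · subst hll; exact le_refl _
      -- swap: give buyer l' the union π l' ∪ π l, and buyer l nothing
      set u : Finset N := π l' ∪ π l with hu
      set π' : Fin L → Finset N :=
        Function.update (Function.update π l ∅) l' u with hπ'
      have hπ'l : ∀ j, π' j = if j = l' then u else if j = l then ∅ else π j := by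
        intro j
        rcases eq_or_ne j l' with h1 | h1
        · subst h1; simp [hπ']
        · rw [hπ', Function.update_of_ne h1]
          rcases eq_or_ne j l with h2 | h2
          · subst h2; simp [h1]
          · rw [Function.update_of_ne h2, if_neg h1, if_neg h2]
      have hd : Disjoint (π l') (π l) := hπdisj _ _ hll
      have key : ∀ j, j ≠ l' → j ≠ l → Disjoint u (π j) := by
        intro j hj1 hj2
        rw [hu, Finset.disjoint_union_left]
        exact ⟨hπdisj l' j (fun h => hj1 h.symm), hπdisj l j (fun h => hj2 h.symm)⟩
      have hπ'disj : ∀ l₁ l₂ : Fin L, l₁ ≠ l₂ → Disjoint (π' l₁) (π' l₂) := by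
        intro j₁ j₂ hne
        rw [hπ'l j₁, hπ'l j₂]
        by_cases h1 : j₁ = l'
        · rw [if_pos h1]
          have h2 : j₂ ≠ l' := fun h => hne (h1.trans h.symm)
          rw [if_neg h2]
          by_cases h3 : j₂ = l
          · rw [if_pos h3]; exact Finset.disjoint_empty_right _
          · rw [if_neg h3]; exact key j₂ h2 h3
        · rw [if_neg h1]
          by_cases h2 : j₁ = l
          · rw [if_pos h2]; exact Finset.disjoint_empty_left _
          · rw [if_neg h2]
            by_cases h3 : j₂ = l'
            · rw [if_pos h3]; exact (key j₁ h1 h2).symm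
            · rw [if_neg h3]
              by_cases h4 : j₂ = l
              · rw [if_pos h4]; exact Finset.disjoint_empty_right _
              · rw [if_neg h4]; exact hπdisj _ _ hne
      have hHle : H π' ≤ H π := hmax' π' hπ'disj
      -- compute H π'
      have hterm : ∀ j, (v j (π' j) - c (π' j)) =
          Function.update (Function.update (fun j => v j (π j) - c (π j)) l 0) l'
            (v l' u - c u) j := by
        intro j
        rw [hπ'l]
        rcases eq_or_ne j l' with h1 | h1
        · subst h1; simp
        · rw [if_neg h1, Function.update_of_ne h1]
          rcases eq_or_ne j l with h2 | h2
          · subst h2; simp [hv0, hc0]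
          · rw [if_neg h2, Function.update_of_ne h2]
      have hHπ' : H π' = (v l' u - c u) - (v l' (π l') - c (π l'))
          - (v l (π l) - c (π l)) + H π := by
        simp only [hH]
        rw [Finset.sum_congr rfl (fun j _ => hterm j)]
        rw [Finset.sum_update_of_mem (Finset.mem_univ l')]
        rw [Finset.sum_update_of_mem
          (show l ∈ Finset.univ \ {l'} by simp [Ne.symm hll])]
        rw [Finset.sum_sdiff_eq_sub
          (show {l} ⊆ Finset.univ \ {l'} by simp [Ne.symm hll])]
        rw [Finset.sum_sdiff_eq_sub (Finset.subset_univ {l'})]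
        simp only [Finset.sum_singleton]
        ring
      have hsup : v l' (π l') + v l' (π l) ≤ v l' u := hvsuper l' _ _ hd
      have hsub : c u ≤ c (π l') + c (π l) := hcsub _ _ hd
      rw [hHπ'] at hHle
      linarith
    have hle : pZ (π l) ≤ v l (π l) := by
      simp only [hpZ]
      exact Finset.sup'_le _ _ fun l' _ => hub l'
    exact le_antisymm hle (hpZ_le l _)
  refine ⟨fun S => ((pZ S : ℤ) : ℝ), π, ?_, hπdisj, ?_, ?_⟩
  · show ((pZ ∅ : ℤ) : ℝ) = 0
    exact_mod_cast hpZ0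
  · -- buyer optimality
    intro l S
    have h1 : v l S ≤ pZ S := hpZ_le l S
    have h2 : pZ (π l) = v l (π l) := hargmax l
    have h3 : v l S - pZ S ≤ v l (π l) - pZ (π l) := by omega
    show (v l (π l) : ℝ) - ((pZ (π l) : ℤ) : ℝ) ≥ (v l S : ℝ) - ((pZ S : ℤ) : ℝ)
    exact_mod_cast h3
  · -- seller optimality
    intro K hK
    obtain ⟨hKne, hKdisj⟩ := hK
    -- Step 1 : the realized collection's seller surplus equals welfare H π
    have hinj : ∀ l₁ ∈ Finset.univ.filter (fun l => π l ≠ ∅),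
        ∀ l₂ ∈ Finset.univ.filter (fun l => π l ≠ ∅), π l₁ = π l₂ → l₁ = l₂ := by
      intro l₁ h₁ l₂ h₂ he
      by_contra hne
      have := hπdisj l₁ l₂ hne
      rw [he] at this
      exact (Finset.mem_filter.mp h₂).2 (by simpa using disjoint_self.mp this)
    have himg : (Finset.univ.image π).erase ∅
        = (Finset.univ.filter (fun l => π l ≠ ∅)).image π := by
      ext S
      simp only [Finset.mem_erase, Finset.mem_image, Finset.mem_filter, Finset.mem_univ,
        true_and]
      constructor
      · rintro ⟨hSne, l, rfl⟩; exact ⟨l, hSne, rfl⟩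
      · rintro ⟨l, hl, rfl⟩; exact ⟨hl, l, rfl⟩
    have hstep1 : ∑ S ∈ (Finset.univ.image π).erase ∅, (pZ S - c S) = H π := by
      rw [himg, Finset.sum_image hinj]
      have : ∀ l : Fin L, pZ (π l) - c (π l) = v l (π l) - c (π l) := by
        intro l; rw [hargmax l]
      rw [Finset.sum_congr rfl (fun l _ => this l)]
      show _ = ∑ l : Fin L, (v l (π l) - c (π l))
      rw [← Finset.sum_filter_add_sum_filter_not Finset.univ (fun l => π l ≠ ∅)]
      have hzero : ∑ l ∈ Finset.univ.filter (fun l => ¬ π l ≠ ∅),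
          (v l (π l) - c (π l)) = 0 := by
        apply Finset.sum_eq_zero
        intro l hl
        have : π l = ∅ := not_not.mp (Finset.mem_filter.mp hl).2
        rw [this, hv0, hc0]
        ring
      rw [hzero, add_zero]
    -- Step 2 : any partition collection gives at most H π
    have hchoice : ∀ S : Finset N, ∃ l : Fin L, ∀ l' : Fin L, v l' S ≤ v l S := by
      intro S
      obtain ⟨l, _, hl⟩ := Finset.exists_max_image Finset.univ (fun l => v l S) hune
      exact ⟨l, fun l' => hl l' (Finset.mem_univ _)⟩
    choose ℓ hℓ using hchoice
    have hpZeq : ∀ S, pZ S = v (ℓ S) S := by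
      intro S
      refine le_antisymm ?_ (hpZ_le _ _)
      simp only [hpZ]
      exact Finset.sup'_le _ _ fun l' _ => hℓ S l'
    set π' : Fin L → Finset N := fun l => (K.filter (fun S => ℓ S = l)).sup id with hπ'
    have hπ'disj : ∀ l₁ l₂ : Fin L, l₁ ≠ l₂ → Disjoint (π' l₁) (π' l₂) := by
      intro l₁ l₂ hne
      rw [hπ', Finset.disjoint_sup_left]
      intro S hS
      rw [Finset.disjoint_sup_right]
      intro T hT
      have hS' := Finset.mem_filter.mp hS
      have hT' := Finset.mem_filter.mp hT
      have hST : S ≠ T := by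
        intro h; exact hne (hS'.2.symm.trans (h ▸ hT'.2))
      exact hKdisj hS'.1 hT'.1 hST
    have hstep2 : ∑ S ∈ K, (pZ S - c S) ≤ H π := by
      have e1 : ∑ S ∈ K, (pZ S - c S) = ∑ S ∈ K, (v (ℓ S) S - c S) := by
        exact Finset.sum_congr rfl fun S _ => by rw [hpZeq]
      rw [e1, ← Finset.sum_fiberwise K ℓ (fun S => v (ℓ S) S - c S)]
      have e2 : ∀ l : Fin L, ∑ S ∈ K.filter (fun S => ℓ S = l), (v (ℓ S) S - c S)
          ≤ v l (π' l) - c (π' l) := by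
        intro l
        have e3 : ∑ S ∈ K.filter (fun S => ℓ S = l), (v (ℓ S) S - c S)
            = ∑ S ∈ K.filter (fun S => ℓ S = l), (v l S - c S) := by
          apply Finset.sum_congr rfl
          intro S hS
          rw [(Finset.mem_filter.mp hS).2]
        rw [e3]
        exact sum_le_of_superadditive (fun S => v l S - c S)
          (by show v l ∅ - c ∅ = 0; rw [hv0 l, hc0]; ring)
          (fun S₁ S₂ hd => by
            have h1 := hvsuper l S₁ S₂ hd
            have h2 := hcsub S₁ S₂ hd
            show v l S₁ - c S₁ + (v l S₂ - c S₂) ≤ v l (S₁ ∪ S₂) - c (S₁ ∪ S₂)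
            omega)
          _ (hKdisj.subset (by intro S hS; exact (Finset.mem_filter.mp hS).1))
      calc ∑ l : Fin L, ∑ S ∈ K.filter (fun S => ℓ S = l), (v (ℓ S) S - c S)
          ≤ ∑ l : Fin L, (v l (π' l) - c (π' l)) := Finset.sum_le_sum fun l _ => e2 l
        _ = H π' := rfl
        _ ≤ H π := hmax' π' hπ'disj
    -- combine
    have hfin : ∑ S ∈ K, (pZ S - c S)
        ≤ ∑ S ∈ (Finset.univ.image π).erase ∅, (pZ S - c S) := by
      rw [hstep1]; exact hstep2
    calc ∑ S ∈ K, (((pZ S : ℤ) : ℝ) - (c S : ℝ))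
        = ((∑ S ∈ K, (pZ S - c S) : ℤ) : ℝ) := by push_cast; ring
      _ ≤ ((∑ S ∈ (Finset.univ.image π).erase ∅, (pZ S - c S) : ℤ) : ℝ) := by
          exact_mod_cast hfin
      _ = ∑ S ∈ (Finset.univ.image π).erase ∅, (((pZ S : ℤ) : ℝ) - (c S : ℝ)) := by
          push_cast; ring
end

section
/- Let N be a finite set, v : 2^N → ℤ superadditive, c : 2^N → ℤ subadditive, p : 2^N → ℝ a pricing function, and S, B ⊆ N disjoint. Suppose (i) p(S) − c(S) + p(B) − c(B) ≥ p(S ∪ B) − c(S ∪ B) (the seller weakly prefers supplying S and B separately to supplying the bundle S ∪ B), (ii) v(B) − p(B) ≥ 0, and (iii) v(S) − p(S) ≥ v(S ∪ B) − p(S ∪ B) (the buyer weakly prefers S to S ∪ B at the given prices). Then p(S ∪ B) = p(S) + p(B) and v(S ∪ B) − p(S ∪ B) = v(S) − p(S); in particular, the buyer is indifferent between receiving S and receiving S ∪ B at these prices. -/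
open Finset

/-- (Case 2B of the ascending auction analysis.) If the seller
weakly prefers supplying `S` and `B` separately to supplying the bundle
`S ∪ B`, the buyer makes a nonnegative surplus on `B`, and the buyer weakly
prefers `S` to `S ∪ B`, then `p(S ∪ B) = p(S) + p(B)` and the buyer is
indifferent between `S` and `S ∪ B`. -/
theorem squeezed_out_package_indifference
    {N : Type*} [Fintype N] [DecidableEq N]
    (v c : Finset N → ℤ) (p : Finset N → ℝ)
    (hv : ∀ S₁ S₂ : Finset N, Disjoint S₁ S₂ → v S₁ + v S₂ ≤ v (S₁ ∪ S₂))
    (hc : ∀ S₁ S₂ : Finset N, Disjoint S₁ S₂ → c (S₁ ∪ S₂) ≤ c S₁ + c S₂)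
    (S B : Finset N) (hSB : Disjoint S B)
    (hseller : p S - (c S : ℝ) + (p B - (c B : ℝ)) ≥
      p (S ∪ B) - (c (S ∪ B) : ℝ))
    (hbuyerB : (v B : ℝ) - p B ≥ 0)
    (hbuyerS : (v S : ℝ) - p S ≥ (v (S ∪ B) : ℝ) - p (S ∪ B)) :
    p (S ∪ B) = p S + p B ∧
      (v (S ∪ B) : ℝ) - p (S ∪ B) = (v S : ℝ) - p S := by
  have hvR : (v S : ℝ) + (v B : ℝ) ≤ (v (S ∪ B) : ℝ) := by
    exact_mod_cast hv S B hSB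
  have hcR : (c (S ∪ B) : ℝ) ≤ (c S : ℝ) + (c B : ℝ) := by
    exact_mod_cast hc S B hSB
  constructor <;> linarith
end
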